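/- arXiv:0902.1088 — 2 statements merged into one kernel-verified Lean document; each statement's English description precedes it below -/
import Mathlib

section
/- Let C be a strongly G-graded tensor category over a field k, let M be a C-module category, and let N be a C_e-submodule category of M. Then, as Serre subcategories of M: (a) C_e ⊗̄ N = N; and (b) C_σ ⊗̄ (C_τ ⊗̄ N) = C_{στ} ⊗̄ N for all σ, τ ∈ G. -/
/-!
STATEMENT 8: Let C be a strongly G-graded tensor category over a field k, let M be a
C-module category, and let N be a C_e-submodule category of M.  Then, as Serre
subcategories of M: (a) C_e ⊗̄ N = N; and (b) C_σ ⊗̄ (C_τ ⊗̄ N) = C_{στ} ⊗̄ N for all σ, τ ∈ G.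
-/

open CategoryTheory Category Limits MonoidalCategory

attribute [local instance] CategoryTheory.Abelian.hasFiniteBiproducts

universe v u v₁ u₁

variable (k : Type*) [Field k]

/-- A `G`-grading on a tensor category `C` over `k`. -/
structure Grading (G : Type*) [Group G] (C : Type u) [Category.{v} C] [Abelian C]
    [Linear k C] [MonoidalCategory C] where
  mem : G → C → Prop
  mem_iso : ∀ {σ : G} {X Y : C}, (X ≅ Y) → mem σ X → mem σ Y
  zero_mem : ∀ (σ : G) {X : C}, IsZero X → mem σ X
  biproduct_mem : ∀ {σ : G} {n : ℕ} (Y : Fin n → C), (∀ i, mem σ (Y i)) → mem σ (⨁ Y)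
  unit_mem : mem (1 : G) (𝟙_ C)
  tensor_mem : ∀ {σ τ : G} {X Y : C}, mem σ X → mem τ Y → mem (σ * τ) (X ⊗ Y)
  decomp : ∀ X : C, ∃ (n : ℕ) (Y : Fin n → C) (d : Fin n → G),
      (∀ i, mem (d i) (Y i)) ∧ Nonempty (X ≅ ⨁ Y)
  hom_eq_zero : ∀ {σ τ : G} {X Y : C}, σ ≠ τ → mem σ X → mem τ Y → ∀ f : X ⟶ Y, f = 0

variable {G : Type*} [Group G] {C : Type u} [Category.{v} C] [Abelian C] [Linear k C]
  [MonoidalCategory C]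

/-- `C` is strongly `G`-graded: every object of `C_{στ}` is isomorphic to a direct sum of
objects `V ⊗ W` with `V ∈ C_σ`, `W ∈ C_τ`. -/
def Grading.Strong (gr : Grading k G C) : Prop :=
  ∀ (σ τ : G) (Z : C), gr.mem (σ * τ) Z →
    ∃ (n : ℕ) (V W : Fin n → C), (∀ i, gr.mem σ (V i)) ∧ (∀ i, gr.mem τ (W i)) ∧
      Nonempty (Z ≅ ⨁ fun i => V i ⊗ W i)

/-- A left `C`-module category structure on a category `M`. -/
structure ModuleStruct (C : Type u) [Category.{v} C] [MonoidalCategory C]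
    (M : Type u₁) [Category.{v₁} M] where
  act : C ⥤ M ⥤ M
  assoc : ∀ (X Y : C) (m : M), (act.obj (X ⊗ Y)).obj m ≅ (act.obj X).obj ((act.obj Y).obj m)
  unitIso : ∀ m : M, (act.obj (𝟙_ C)).obj m ≅ m
  assoc_natural_left : ∀ {X X' : C} (f : X ⟶ X') (Y : C) (m : M),
      (act.map (f ▷ Y)).app m ≫ (assoc X' Y m).hom =
        (assoc X Y m).hom ≫ (act.map f).app ((act.obj Y).obj m)
  assoc_natural_mid : ∀ (X : C) {Y Y' : C} (g : Y ⟶ Y') (m : M),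
      (act.map (X ◁ g)).app m ≫ (assoc X Y' m).hom =
        (assoc X Y m).hom ≫ (act.obj X).map ((act.map g).app m)
  assoc_natural_right : ∀ (X Y : C) {m m' : M} (f : m ⟶ m'),
      (act.obj (X ⊗ Y)).map f ≫ (assoc X Y m').hom =
        (assoc X Y m).hom ≫ (act.obj X).map ((act.obj Y).map f)
  pentagon : ∀ (X Y Z : C) (m : M),
      (act.map (α_ X Y Z).hom).app m ≫ (assoc X (Y ⊗ Z) m).hom ≫
          (act.obj X).map ((assoc Y Z m).hom) =
        (assoc (X ⊗ Y) Z m).hom ≫ (assoc X Y ((act.obj Z).obj m)).hom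
  unit_natural : ∀ {m m' : M} (f : m ⟶ m'),
      (act.obj (𝟙_ C)).map f ≫ (unitIso m').hom = (unitIso m).hom ≫ f
  unit_act : ∀ (X : C) (m : M),
      (act.map (λ_ X).hom).app m = (assoc (𝟙_ C) X m).hom ≫ (unitIso ((act.obj X).obj m)).hom
  act_unit : ∀ (X : C) (m : M),
      (act.map (ρ_ X).hom).app m = (assoc X (𝟙_ C) m).hom ≫ (act.obj X).map ((unitIso m).hom)

variable {M : Type u₁} [Category.{v₁} M] [Abelian M] [Linear k M]

/-- A Serre subcategory of an abelian category `M`, given by its class of objects: closed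
under isomorphisms, zero, subobjects, quotients and extensions. -/
structure Serre (M : Type u₁) [Category.{v₁} M] [Abelian M] where
  mem : M → Prop
  mem_iso : ∀ {A B : M}, (A ≅ B) → mem A → mem B
  zero_mem : ∀ {A : M}, IsZero A → mem A
  mem_of_mono : ∀ {A B : M} (f : A ⟶ B), Mono f → mem B → mem A
  mem_of_epi : ∀ {A B : M} (f : A ⟶ B), Epi f → mem A → mem B
  mem_of_extension : ∀ (S : ShortComplex M), S.ShortExact → mem S.X₁ → mem S.X₃ → mem S.X₂

/-- A Serre subcategory `N` of a `C`-module category `M` is closed under the action of the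
objects of `C` satisfying a predicate `P` (e.g. `P = gr.mem 1` for a `C_e`-submodule
category). -/
def Serre.ClosedUnder (sM : ModuleStruct C M) (P : C → Prop) (N : Serre M) : Prop :=
  ∀ {V : C} {A : M}, P V → N.mem A → N.mem ((sM.act.obj V).obj A)

/-- The object class of `C_σ ⊗̄ N`: subquotients in `M` of objects `V ⊗ n` with `V ∈ C_σ`
and `n` in the class `P` (a subquotient of `X` is a subobject of a quotient of `X`). -/
def tensProd (gr : Grading k G C) (sM : ModuleStruct C M) (σ : G) (P : M → Prop)
    (A : M) : Prop :=
  ∃ (V : C) (n B : M) (p : (sM.act.obj V).obj n ⟶ B) (i : A ⟶ B),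
    gr.mem σ V ∧ P n ∧ Epi p ∧ Mono i

/-- `A` is a subquotient of `X`. -/
def Subq {M : Type u₁} [Category.{v₁} M] [Abelian M] (A X : M) : Prop :=
  ∃ (B : M) (p : X ⟶ B) (i : A ⟶ B), Epi p ∧ Mono i

lemma Subq.trans {A X Y : M} (h1 : Subq A X) (h2 : Subq X Y) : Subq A Y := by
  obtain ⟨B₁, p, i, hp, hi⟩ := h1
  obtain ⟨B₂, q, j, hq, hj⟩ := h2
  haveI := hp; haveI := hi; haveI := hq; haveI := hj
  exact ⟨pushout p j, q ≫ pushout.inr p j, i ≫ pushout.inl p j, epi_comp _ _, mono_comp _ _⟩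

lemma subq_of_iso {A X : M} (e : A ≅ X) : Subq A X :=
  ⟨X, 𝟙 X, e.hom, inferInstance, inferInstance⟩

lemma subq_of_epi {X B : M} (p : X ⟶ B) [Epi p] : Subq B X :=
  ⟨B, p, 𝟙 B, inferInstance, inferInstance⟩

lemma subq_map (F : M ⥤ M) [PreservesFiniteLimits F] [PreservesFiniteColimits F]
    {A X : M} (h : Subq A X) : Subq (F.obj A) (F.obj X) := by
  obtain ⟨B, p, i, hp, hi⟩ := h
  haveI := hp; haveI := hi
  exact ⟨F.obj B, F.map p, F.map i, F.map_epi p, F.map_mono i⟩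

/-- For a strongly `G`-graded tensor category `C` (with biexact tensor product and biexact
module action), a `C`-module category `M` and a `C_e`-submodule category `N` of `M`
(a Serre subcategory closed under the action of `C_e`):
(a) `C_e ⊗̄ N = N`, and (b) `C_σ ⊗̄ (C_τ ⊗̄ N) = C_{στ} ⊗̄ N` for all `σ, τ ∈ G`,
as (object classes of) Serre subcategories of `M`. -/
theorem stmt8 [MonoidalPreadditive C] [MonoidalLinear k C]
    [∀ V : C, PreservesFiniteLimits (tensorLeft V)]
    [∀ V : C, PreservesFiniteColimits (tensorLeft V)]
    [∀ V : C, PreservesFiniteLimits (tensorRight V)]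
    [∀ V : C, PreservesFiniteColimits (tensorRight V)]
    (gr : Grading k G C) (hstrong : gr.Strong k)
    (sM : ModuleStruct C M)
    [∀ V : C, PreservesFiniteLimits (sM.act.obj V)]
    [∀ V : C, PreservesFiniteColimits (sM.act.obj V)]
    [∀ V : C, (sM.act.obj V).Additive]
    [∀ A : M, (sM.act.flip.obj A).Additive]
    (N : Serre M) (hN : N.ClosedUnder sM (gr.mem 1)) :
    (∀ A : M, tensProd k gr sM 1 N.mem A ↔ N.mem A) ∧
    (∀ (σ τ : G) (A : M),
      tensProd k gr sM σ (tensProd k gr sM τ N.mem) A ↔ tensProd k gr sM (σ * τ) N.mem A) := by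
  constructor
  · intro A
    constructor
    · rintro ⟨V, n, B, p, i, hV, hn, hp, hi⟩
      exact N.mem_of_mono i hi (N.mem_of_epi p hp (hN hV hn))
    · intro hA
      exact ⟨𝟙_ C, A, A, (sM.unitIso A).hom, 𝟙 A, gr.unit_mem, hA, inferInstance, inferInstance⟩
  · intro σ τ A
    constructor
    · rintro ⟨V, m, B, p, i, hV, hm, hp, hi⟩
      obtain ⟨W, n, B', q, j, hW, hn, hq, hj⟩ := hm
      have h1 : Subq A ((sM.act.obj V).obj m) := ⟨B, p, i, hp, hi⟩
      have h2 : Subq ((sM.act.obj V).obj m)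
          ((sM.act.obj V).obj ((sM.act.obj W).obj n)) :=
        subq_map (sM.act.obj V) ⟨B', q, j, hq, hj⟩
      have h3 : Subq ((sM.act.obj V).obj ((sM.act.obj W).obj n))
          ((sM.act.obj (V ⊗ W)).obj n) := subq_of_iso (sM.assoc V W n).symm
      obtain ⟨B'', p'', i'', hp'', hi''⟩ := (h1.trans h2).trans h3
      exact ⟨V ⊗ W, n, B'', p'', i'', gr.tensor_mem hV hW, hn, hp'', hi''⟩
    · rintro ⟨Z, n, B, p, i, hZ, hn, hp, hi⟩
      obtain ⟨m, Vf, Wf, hVf, hWf, ⟨e⟩⟩ := hstrong σ τ Z hZ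
      let r : ((⨁ Vf) ⊗ (⨁ Wf) : C) ⟶ ⨁ (fun i => Vf i ⊗ Wf i) :=
        biproduct.lift fun i => biproduct.π Vf i ⊗ₘ biproduct.π Wf i
      let s : (⨁ (fun i => Vf i ⊗ Wf i) : C) ⟶ (⨁ Vf) ⊗ (⨁ Wf) :=
        biproduct.desc fun i => biproduct.ι Vf i ⊗ₘ biproduct.ι Wf i
      have hsr : s ≫ r = 𝟙 _ := by
        apply biproduct.hom_ext
        intro i'
        apply biproduct.hom_ext'
        intro j
        simp only [r, s, Category.assoc, biproduct.lift_π, biproduct.ι_desc_assoc,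
          Category.id_comp, tensorHom_comp_tensorHom, biproduct.ι_π]
        by_cases h : j = i'
        · subst h
          simp
        · simp only [dif_neg h, MonoidalPreadditive.zero_tensor]
      let e' : (sM.act.obj ((⨁ Vf) ⊗ (⨁ Wf))).obj n ⟶ (sM.act.obj Z).obj n :=
        (sM.act.map (r ≫ e.inv)).app n
      haveI : IsSplitEpi e' := ⟨⟨⟨(sM.act.map (e.hom ≫ s)).app n, by
        simp only [e', ← NatTrans.comp_app, ← sM.act.map_comp]
        rw [Category.assoc, ← Category.assoc s r, hsr, Category.id_comp, e.hom_inv_id,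
          sM.act.map_id, NatTrans.id_app]⟩⟩⟩
      have h0 : Subq A ((sM.act.obj Z).obj n) := ⟨B, p, i, hp, hi⟩
      have h1 : Subq ((sM.act.obj Z).obj n)
          ((sM.act.obj ((⨁ Vf) ⊗ (⨁ Wf))).obj n) := subq_of_epi e'
      have h2 : Subq ((sM.act.obj ((⨁ Vf) ⊗ (⨁ Wf))).obj n)
          ((sM.act.obj (⨁ Vf)).obj ((sM.act.obj (⨁ Wf)).obj n)) :=
        subq_of_iso (sM.assoc (⨁ Vf) (⨁ Wf) n)
      obtain ⟨B'', p'', i'', hp'', hi''⟩ := (h0.trans h1).trans h2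
      refine ⟨⨁ Vf, (sM.act.obj (⨁ Wf)).obj n, B'', p'', i'',
        gr.biproduct_mem Vf hVf, ?_, hp'', hi''⟩
      exact ⟨⨁ Wf, n, (sM.act.obj (⨁ Wf)).obj n, 𝟙 _, 𝟙 _,
        gr.biproduct_mem Wf hWf, hn, inferInstance, inferInstance⟩
end

section
/- Let C be a strongly G-graded tensor category over a field k, let M be a C-module category, let N be a C_e-submodule category of M, and let σ ∈ G. Then C_σ ⊗̄ N is a simple C_e-module category if and only if N is a simple C_e-module category. -/
/-!
STATEMENT 9: Let C be a strongly G-graded tensor category over a field k, let M be a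
C-module category, let N be a C_e-submodule category of M, and let σ ∈ G.  Then C_σ ⊗̄ N is
a simple C_e-module category if and only if N is a simple C_e-module category.
-/

open CategoryTheory Category Limits MonoidalCategory

attribute [local instance] CategoryTheory.Abelian.hasFiniteBiproducts

universe v u v₁ u₁

variable (k : Type*) [Field k]

variable {G : Type*} [Group G] {C : Type u} [Category.{v} C] [Abelian C] [Linear k C]
  [MonoidalCategory C]

variable {M : Type u₁} [Category.{v₁} M] [Abelian M] [Linear k M]

/-- A class of objects `Q` of `M` is closed under the action of the objects of `C`
satisfying `P`. -/
def ClassClosedUnder (sM : ModuleStruct C M) (P : C → Prop) (Q : M → Prop) : Prop :=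
  ∀ {V : C} {A : M}, P V → Q A → Q ((sM.act.obj V).obj A)

/-- Simplicity of the module (sub)category of `M` determined by the object class `Q`, over
the tensor subcategory of `C` determined by `P`: it is nonzero, and every Serre subcategory
of `M` closed under the `P`-action and contained in `Q` is either zero or all of `Q`. -/
def SimpleClass (sM : ModuleStruct C M) (P : C → Prop) (Q : M → Prop) : Prop :=
  (∃ A : M, Q A ∧ ¬ IsZero A) ∧
  ∀ N' : Serre M, N'.ClosedUnder sM P → (∀ A, N'.mem A → Q A) →
    (∀ A, N'.mem A → IsZero A) ∨ (∀ A, Q A → N'.mem A)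

/-! ### Auxiliary material -/

theorem isZero_biproduct_of {n : ℕ} {Y : Fin n → M} (h : ∀ i, IsZero (Y i)) :
    IsZero (⨁ Y) := by
  rw [IsZero.iff_id_eq_zero]
  apply biproduct.hom_ext
  intro j
  apply (h j).eq_of_tgt

theorem exists_not_isZero {n : ℕ} {Y : Fin n → M} (h : ¬ IsZero (⨁ Y)) :
    ∃ i, ¬ IsZero (Y i) := by
  by_contra hc
  push_neg at hc
  exact h (isZero_biproduct_of hc)

theorem Serre.mem_biproduct (N : Serre M) : ∀ {n : ℕ} (Y : Fin n → M),
    (∀ i, N.mem (Y i)) → N.mem (⨁ Y) := by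
  intro n
  induction n with
  | zero =>
    intro Y _
    exact N.zero_mem (isZero_biproduct_of (fun i => i.elim0))
  | succ n ih =>
    intro Y h
    have hfg : biproduct.ι Y 0 ≫ biproduct.lift (fun i : Fin n => biproduct.π Y i.succ) = 0 := by
      ext j
      simp [biproduct.ι_π, (Fin.succ_ne_zero j).symm]
    have key : ∀ i : Fin n, biproduct.ι Y i.succ ≫
        biproduct.lift (fun j : Fin n => biproduct.π Y j.succ) =
        biproduct.ι (fun j : Fin n => Y j.succ) i := by
      intro i
      ext j
      by_cases hij : i = j
      · subst hij; simp
      · rw [Category.assoc, biproduct.lift_π,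
          biproduct.ι_π_ne _ (fun hh => hij (Fin.succ_injective _ hh)),
          biproduct.ι_π_ne _ hij]
    have hS : (ShortComplex.mk _ _ hfg).ShortExact := by
      refine ShortComplex.Splitting.shortExact
        { r := biproduct.π Y 0
          s := biproduct.desc fun i : Fin n => biproduct.ι Y i.succ
          f_r := by simp
          s_g := by
            apply biproduct.hom_ext'
            intro i
            simp only [← Category.assoc, biproduct.ι_desc, Category.comp_id]
            exact key i
          id := by
            apply biproduct.hom_ext'
            intro j
            induction j using Fin.cases with
            | zero => simp [Preadditive.comp_add, reassoc_of% hfg]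
            | succ i =>
              simp [Preadditive.comp_add, reassoc_of% (key i),
                reassoc_of% (biproduct.ι_π_ne Y (Fin.succ_ne_zero i))] }
    exact N.mem_of_extension _ hS (h 0) (ih _ fun i => h i.succ)

/-- The intersection of two Serre subcategories. -/
def Serre.inter (N₁ N₂ : Serre M) : Serre M where
  mem A := N₁.mem A ∧ N₂.mem A
  mem_iso e h := ⟨N₁.mem_iso e h.1, N₂.mem_iso e h.2⟩
  zero_mem h := ⟨N₁.zero_mem h, N₂.zero_mem h⟩
  mem_of_mono f hf h := ⟨N₁.mem_of_mono f hf h.1, N₂.mem_of_mono f hf h.2⟩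
  mem_of_epi f hf h := ⟨N₁.mem_of_epi f hf h.1, N₂.mem_of_epi f hf h.2⟩
  mem_of_extension S hS h1 h3 :=
    ⟨N₁.mem_of_extension S hS h1.1 h3.1, N₂.mem_of_extension S hS h1.2 h3.2⟩

/-- The Serre subcategory of all `A` such that `V ⊗ A` belongs to `N` for all `V`
satisfying `P`. -/
def Serre.actInv (sM : ModuleStruct C M) (P : C → Prop) (N : Serre M)
    [∀ V : C, PreservesFiniteLimits (sM.act.obj V)]
    [∀ V : C, PreservesFiniteColimits (sM.act.obj V)]
    [∀ V : C, (sM.act.obj V).Additive] : Serre M where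
  mem A := ∀ {W : C}, P W → N.mem ((sM.act.obj W).obj A)
  mem_iso := @fun A B e h W hW => N.mem_iso ((sM.act.obj W).mapIso e) (h hW)
  zero_mem := @fun A h W hW => N.zero_mem ((sM.act.obj W).map_isZero h)
  mem_of_mono := @fun A B f hf h W hW =>
    N.mem_of_mono ((sM.act.obj W).map f)
      (by have := hf; exact preserves_mono_of_preservesLimit _ f) (h hW)
  mem_of_epi := @fun A B f hf h W hW =>
    N.mem_of_epi ((sM.act.obj W).map f)
      (by have := hf; exact preserves_epi_of_preservesColimit _ f) (h hW)
  mem_of_extension := fun S hS h1 h3 => @fun W hW =>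
    N.mem_of_extension (S.map (sM.act.obj W)) (hS.map_of_exact _) (h1 hW) (h3 hW)

/-- If `𝟙_ C ≅ ⨁ (Vf i ⊗ Wf i)` then every `A : M` decomposes as
`A ≅ ⨁ (Vf i ⊗ (Wf i ⊗ A))`. -/
theorem ModuleStruct.decompIso (sM : ModuleStruct C M)
    [∀ A : M, (sM.act.flip.obj A).Additive]
    {m : ℕ} {Vf Wf : Fin m → C} (e : 𝟙_ C ≅ ⨁ fun i => Vf i ⊗ Wf i) (A : M) :
    Nonempty (A ≅ ⨁ fun i => (sM.act.obj (Vf i)).obj ((sM.act.obj (Wf i)).obj A)) :=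
  ⟨(sM.unitIso A).symm ≪≫ ((sM.act.flip.obj A).mapIso e : _ ≅ _) ≪≫
    (Functor.mapBiproduct (sM.act.flip.obj A) fun i => Vf i ⊗ Wf i) ≪≫
    biproduct.mapIso fun i => sM.assoc (Vf i) (Wf i) A⟩

/-- Characterization of `C_σ ⊗̄ N` as `{A | C_{σ⁻¹} ⊗ A ⊆ N}`. -/
theorem tensProd_iff (gr : Grading k G C) (hstrong : gr.Strong k)
    (sM : ModuleStruct C M)
    [∀ V : C, PreservesFiniteLimits (sM.act.obj V)]
    [∀ V : C, PreservesFiniteColimits (sM.act.obj V)]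
    [∀ V : C, (sM.act.obj V).Additive]
    [∀ A : M, (sM.act.flip.obj A).Additive]
    (N : Serre M) (hN : N.ClosedUnder sM (gr.mem 1)) (σ : G) (A : M) :
    tensProd k gr sM σ N.mem A ↔
      ∀ {W : C}, gr.mem σ⁻¹ W → N.mem ((sM.act.obj W).obj A) := by
  constructor
  · rintro ⟨V, n, B, p, i, hV, hn, hp, hi⟩ W hW
    have hWV : gr.mem 1 (W ⊗ V) := by
      have := gr.tensor_mem hW hV; rwa [inv_mul_cancel] at this
    have h2 : N.mem ((sM.act.obj W).obj ((sM.act.obj V).obj n)) :=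
      N.mem_iso (sM.assoc W V n) (hN hWV hn)
    have hpe : Epi ((sM.act.obj W).map p) := by
      have := hp; exact preserves_epi_of_preservesColimit _ p
    have him : Mono ((sM.act.obj W).map i) := by
      have := hi; exact preserves_mono_of_preservesLimit _ i
    exact N.mem_of_mono _ him (N.mem_of_epi _ hpe h2)
  · intro h
    have hunit : gr.mem (σ * σ⁻¹) (𝟙_ C) := by
      rw [mul_inv_cancel]; exact gr.unit_mem
    obtain ⟨m, Vf, Wf, hVf, hWf, ⟨e⟩⟩ := hstrong σ σ⁻¹ _ hunit
    obtain ⟨eA⟩ := sM.decompIso e A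
    set n' : M := ⨁ fun i => (sM.act.obj (Wf i)).obj A with hn'def
    have e2 : (sM.act.obj (⨁ Vf)).obj n' ≅
        ⨁ fun j => ⨁ fun i => (sM.act.obj (Vf j)).obj ((sM.act.obj (Wf i)).obj A) :=
      (Functor.mapBiproduct (sM.act.flip.obj n') Vf : _ ≅ _) ≪≫
        biproduct.mapIso fun j =>
          (Functor.mapBiproduct (sM.act.obj (Vf j))
            (fun i => (sM.act.obj (Wf i)).obj A) : _ ≅ _)
    let d : (⨁ fun j => (sM.act.obj (Vf j)).obj ((sM.act.obj (Wf j)).obj A)) ⟶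
        ⨁ fun j => ⨁ fun i => (sM.act.obj (Vf j)).obj ((sM.act.obj (Wf i)).obj A) :=
      biproduct.map fun j =>
        biproduct.ι (fun i => (sM.act.obj (Vf j)).obj ((sM.act.obj (Wf i)).obj A)) j
    have hd : IsSplitMono d := IsSplitMono.mk'
      { retraction := biproduct.map fun j =>
          biproduct.π (fun i => (sM.act.obj (Vf j)).obj ((sM.act.obj (Wf i)).obj A)) j
        id := by
          apply biproduct.hom_ext
          intro j
          simp [d] }
    have hmono : Mono (eA.hom ≫ d ≫ e2.inv) := by
      have := hd
      infer_instance
    exact ⟨⨁ Vf, n', (sM.act.obj (⨁ Vf)).obj n', 𝟙 _, eA.hom ≫ d ≫ e2.inv,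
      gr.biproduct_mem Vf hVf, N.mem_biproduct _ (fun i => h (hWf i)),
      inferInstance, hmono⟩

/-- For a strongly `G`-graded tensor category `C` (with biexact tensor product and biexact
module action), a `C`-module category `M`, a `C_e`-submodule category `N` of `M`, and
`σ ∈ G`: the Serre subcategory `C_σ ⊗̄ N` is again closed under the action of `C_e`, and it
is a simple `C_e`-module category if and only if `N` is a simple `C_e`-module category. -/
theorem stmt9 [MonoidalPreadditive C] [MonoidalLinear k C]
    [∀ V : C, PreservesFiniteLimits (tensorLeft V)]
    [∀ V : C, PreservesFiniteColimits (tensorLeft V)]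
    [∀ V : C, PreservesFiniteLimits (tensorRight V)]
    [∀ V : C, PreservesFiniteColimits (tensorRight V)]
    (gr : Grading k G C) (hstrong : gr.Strong k)
    (sM : ModuleStruct C M)
    [∀ V : C, PreservesFiniteLimits (sM.act.obj V)]
    [∀ V : C, PreservesFiniteColimits (sM.act.obj V)]
    [∀ V : C, (sM.act.obj V).Additive]
    [∀ A : M, (sM.act.flip.obj A).Additive]
    (N : Serre M) (hN : N.ClosedUnder sM (gr.mem 1)) (σ : G) :
    ClassClosedUnder sM (gr.mem 1) (tensProd k gr sM σ N.mem) ∧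
    (SimpleClass sM (gr.mem 1) (tensProd k gr sM σ N.mem) ↔
      SimpleClass sM (gr.mem 1) N.mem) := by
  have hc : ClassClosedUnder sM (gr.mem 1) (tensProd k gr sM σ N.mem) := by
    intro U A hU hA
    rw [tensProd_iff k gr hstrong sM N hN σ] at hA ⊢
    intro W hW
    have h1 : gr.mem σ⁻¹ (W ⊗ U) := by
      have := gr.tensor_mem hW hU; rwa [mul_one] at this
    exact N.mem_iso (sM.assoc W U A) (hA h1)
  refine ⟨hc, ?_, ?_⟩
  · -- `C_σ ⊗̄ N` simple implies `N` simple
    intro hT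
    constructor
    · obtain ⟨A, hA, hA0⟩ := hT.1
      obtain ⟨V, n, B, p, i, hV, hn, hp, hi⟩ := hA
      refine ⟨n, hn, fun hz => hA0 ?_⟩
      have hB : IsZero B := by
        have := hp
        exact IsZero.of_epi p ((sM.act.obj V).map_isZero hz)
      have := hi
      exact IsZero.of_mono i hB
    · intro N' hN'c hN'sub
      have hQc : (Serre.actInv sM (gr.mem σ⁻¹) N').ClosedUnder sM (gr.mem 1) := by
        intro U A hU hA
        refine fun {W} hW => ?_
        have h1 : gr.mem σ⁻¹ (W ⊗ U) := by
          have := gr.tensor_mem hW hU; rwa [mul_one] at this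
        exact N'.mem_iso (sM.assoc W U A) (hA h1)
      have hQsub : ∀ A, (Serre.actInv sM (gr.mem σ⁻¹) N').mem A →
          tensProd k gr sM σ N.mem A := by
        intro A hA
        rw [tensProd_iff k gr hstrong sM N hN σ]
        intro W hW
        exact hN'sub _ (hA hW)
      rcases hT.2 _ hQc hQsub with hz | hfull
      · left
        intro B hB
        have hu : gr.mem (σ⁻¹ * σ) (𝟙_ C) := by rw [inv_mul_cancel]; exact gr.unit_mem
        obtain ⟨m, Wf, Vf, hWf, hVf, ⟨e⟩⟩ := hstrong σ⁻¹ σ _ hu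
        obtain ⟨eB⟩ := sM.decompIso e B
        refine IsZero.of_iso (isZero_biproduct_of fun j => ?_) eB
        refine (sM.act.obj (Wf j)).map_isZero ?_
        refine hz _ (fun {W} hW => ?_)
        have h1 : gr.mem 1 (W ⊗ Vf j) := by
          have := gr.tensor_mem hW (hVf j); rwa [inv_mul_cancel] at this
        exact N'.mem_iso (sM.assoc W (Vf j) B) (hN'c h1 hB)
      · right
        intro B hB
        have hu : gr.mem (σ⁻¹ * σ) (𝟙_ C) := by rw [inv_mul_cancel]; exact gr.unit_mem
        obtain ⟨m, Wf, Vf, hWf, hVf, ⟨e⟩⟩ := hstrong σ⁻¹ σ _ hu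
        obtain ⟨eB⟩ := sM.decompIso e B
        refine N'.mem_iso eB.symm (N'.mem_biproduct _ fun j => ?_)
        have hT' : tensProd k gr sM σ N.mem ((sM.act.obj (Vf j)).obj B) :=
          ⟨Vf j, B, _, 𝟙 _, 𝟙 _, hVf j, hB, inferInstance, inferInstance⟩
        exact hfull _ hT' (hWf j)
  · -- `N` simple implies `C_σ ⊗̄ N` simple
    intro hNs
    constructor
    · obtain ⟨A₀, hA₀, h0⟩ := hNs.1
      have hu : gr.mem (σ⁻¹ * σ) (𝟙_ C) := by rw [inv_mul_cancel]; exact gr.unit_mem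
      obtain ⟨m, Wf, Vf, hWf, hVf, ⟨e⟩⟩ := hstrong σ⁻¹ σ _ hu
      obtain ⟨eA⟩ := sM.decompIso e A₀
      obtain ⟨j, hj⟩ := exists_not_isZero (Y := fun i =>
        (sM.act.obj (Wf i)).obj ((sM.act.obj (Vf i)).obj A₀))
        (fun hzz => h0 (IsZero.of_iso hzz eA))
      refine ⟨(sM.act.obj (Vf j)).obj A₀,
        ⟨Vf j, A₀, _, 𝟙 _, 𝟙 _, hVf j, hA₀, inferInstance, inferInstance⟩, fun hz => hj ?_⟩
      exact (sM.act.obj (Wf j)).map_isZero hz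
    · intro N'' hN''c hN''sub
      by_cases hzero : ∀ A, N''.mem A → IsZero A
      · exact Or.inl hzero
      push_neg at hzero
      obtain ⟨A, hA, hA0⟩ := hzero
      have hN₀c : (N.inter (Serre.actInv sM (gr.mem σ) N'')).ClosedUnder sM (gr.mem 1) := by
        intro U B hU hB
        refine ⟨hN hU hB.1, fun {V} hV => ?_⟩
        have h1 : gr.mem σ (V ⊗ U) := by
          have := gr.tensor_mem hV hU; rwa [mul_one] at this
        exact N''.mem_iso (sM.assoc V U B) (hB.2 h1)
      rcases hNs.2 _ hN₀c (fun B h => h.1) with hz | hfull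
      · exfalso
        have hAT := hN''sub A hA
        rw [tensProd_iff k gr hstrong sM N hN σ] at hAT
        have hu : gr.mem (σ * σ⁻¹) (𝟙_ C) := by rw [mul_inv_cancel]; exact gr.unit_mem
        obtain ⟨m, Vf, Wf, hVf, hWf, ⟨e⟩⟩ := hstrong σ σ⁻¹ _ hu
        obtain ⟨eA⟩ := sM.decompIso e A
        obtain ⟨i, hi⟩ := exists_not_isZero (Y := fun i =>
          (sM.act.obj (Vf i)).obj ((sM.act.obj (Wf i)).obj A))
          (fun hzz => hA0 (IsZero.of_iso hzz eA))
        have hWiA0 : ¬ IsZero ((sM.act.obj (Wf i)).obj A) := fun hzz =>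
          hi ((sM.act.obj (Vf i)).map_isZero hzz)
        refine hWiA0 (hz _ ⟨hAT (hWf i), fun {V} hV => ?_⟩)
        have h1 : gr.mem 1 (V ⊗ Wf i) := by
          have := gr.tensor_mem hV (hWf i); rwa [mul_inv_cancel] at this
        exact N''.mem_iso (sM.assoc V (Wf i) A) (hN''c h1 hA)
      · right
        rintro A' ⟨V, n, B, p, i, hV, hn, hp, hi⟩
        have h1 : N''.mem ((sM.act.obj V).obj n) := (hfull n hn).2 hV
        exact N''.mem_of_mono i hi (N''.mem_of_epi p hp h1)
end
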